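/- arXiv:1804.09076 — 3 statements merged into one kernel-verified Lean document; each statement's English description precedes it below -/
import Mathlib

section
/- Let X be a topological space admitting a countable cover {A_i}_{i∈ℕ} by closed subsets such that each A_i, equipped with the subspace topology, is metrizable. If K ⊆ X is a sequentially compact subspace (every sequence in K has a subsequence converging in X to a point of K), then K is compact. -/
/-!
Each piece `K ∩ A i` is sequentially compact because `A i` is closed, hence compact because it
lies in the metrizable subspace `A i`. So `K` is a countable union of compact sets and therefore
Lindelöf, and a sequentially (hence countably) compact Lindelöf set is compact.
-/

open Set Filter TopologicalSpace

section

variable {X : Type*} [TopologicalSpace X]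

theorem IsSeqCompact.inter_right {K A : Set X} (hK : IsSeqCompact K) (hA : IsClosed A) :
    IsSeqCompact (K ∩ A) := fun _ hx ↦
  let ⟨a, haK, φ, hφ, hlim⟩ := hK fun n ↦ (hx n).1
  ⟨a, ⟨haK, hA.mem_of_tendsto hlim (Eventually.of_forall fun n ↦ (hx (φ n)).2)⟩, φ, hφ, hlim⟩

theorem IsSeqCompact.isCompact_of_subset_pseudoMetrizable {S A : Set X}
    [PseudoMetrizableSpace A] (hS : IsSeqCompact S) (hSA : S ⊆ A) : IsCompact S := by
  have hS' : IsSeqCompact ((↑) ⁻¹' S : Set A) := by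
    rwa [Subtype.isSeqCompact_iff, Subtype.image_preimage_coe, inter_eq_right.2 hSA]
  simpa only [Subtype.image_preimage_coe, inter_eq_right.2 hSA] using
    Subtype.isCompact_iff.1 hS'.isCompact

end

theorem stmt_0 {X : Type*} [TopologicalSpace X] (A : ℕ → Set X)
    (hclosed : ∀ i, IsClosed (A i)) (hcover : (⋃ i, A i) = Set.univ)
    (hmetr : ∀ i, TopologicalSpace.MetrizableSpace (A i))
    (K : Set X) (hK : IsSeqCompact K) : IsCompact K := by
  have hpieces : ∀ i, IsCompact (K ∩ A i) := fun i ↦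
    have := hmetr i
    (hK.inter_right (hclosed i)).isCompact_of_subset_pseudoMetrizable inter_subset_right
  have hunion : K = ⋃ i, K ∩ A i := by rw [← inter_iUnion, hcover, inter_univ]
  have hlindelof : IsLindelof K := hunion ▸ isLindelof_iUnion fun i ↦ (hpieces i).isLindelof
  exact hlindelof.isCompact hK.isCountablyCompact
end

section
/- For every integer n ≥ 1 there is a constant C = C(n) > 0 with the following property: if S ⊆ ℝ^{n+1} is a Borel set and A > 0 satisfy H^n(S ∩ B_r(y)) ≤ A r^n for all y ∈ ℝ^{n+1} and all r > 0, then λ[S] ≤ C · A. -/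
open MeasureTheory Metric Set
open scoped ENNReal

noncomputable section

/-- The Gaussian surface area `F[S] = (4π)^{-n/2} ∫_S e^{-|x|²/4} dH^n` of a set
`S ⊆ ℝ^{n+1}`, valued in `[0, ∞]`. -/
def gaussianArea (n : ℕ) (S : Set (EuclideanSpace ℝ (Fin (n + 1)))) : ℝ≥0∞ :=
  ENNReal.ofReal ((4 * Real.pi) ^ (-(n : ℝ) / 2)) *
    ∫⁻ x in S, ENNReal.ofReal (Real.exp (-‖x‖ ^ 2 / 4)) ∂(μH[n])

/-- The Colding–Minicozzi entropy `λ[S] = sup_{ρ>0, y} F[ρS + y]`, valued in `[0, ∞]`. -/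
def entropy (n : ℕ) (S : Set (EuclideanSpace ℝ (Fin (n + 1)))) : ℝ≥0∞ :=
  ⨆ (ρ : ℝ) (_ : 0 < ρ) (y : EuclideanSpace ℝ (Fin (n + 1))),
    gaussianArea n ((fun x => ρ • x + y) '' S)

/-! Cut `ℝ^{n+1}` into the shells `k ≤ |x| < k + 1`: on the `k`-th shell the Gaussian weight is at
most `e^{-k²/4}` and the area of `S` is at most `A (k + 1)^n`, so
`F[S] ≤ (4π)^{-n/2} A ∑ₖ e^{-k²/4} (k + 1)^n`. The area growth bound is invariant, with the same
`A`, under translations and dilations, so the same bound holds for every `ρS + y`. -/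

open scoped Pointwise

section AreaGrowth

variable {E : Type*} [NormedAddCommGroup E] [MeasurableSpace E] [BorelSpace E]

def AreaGrowthBound (n : ℕ) (A : ℝ) (S : Set E) : Prop :=
  ∀ (y : E) (r : ℝ), 0 < r → μH[n] (S ∩ ball y r) ≤ ENNReal.ofReal (A * r ^ n)

namespace AreaGrowthBound

variable {n : ℕ} {A : ℝ} {S : Set E}

theorem vadd (h : AreaGrowthBound n A S) (y : E) : AreaGrowthBound n A (y +ᵥ S) := by
  intro z r hr
  have hball : ball z r = y +ᵥ ball (-y +ᵥ z) r := by
    rw [vadd_ball'', vadd_neg_vadd]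
  rw [hball, ← Set.vadd_set_inter, hausdorffMeasure_vadd _ (Or.inl (Nat.cast_nonneg n))]
  exact h _ r hr

theorem smul {𝕜 : Type*} [NormedField 𝕜] [NormedSpace 𝕜 E] (h : AreaGrowthBound n A S)
    {c : 𝕜} (hc : c ≠ 0) : AreaGrowthBound n A (c • S) := by
  intro z r hr
  have hc' : 0 < ‖c‖ := norm_pos_iff.mpr hc
  have hball : ball z r = c • ball (c⁻¹ • z) (r / ‖c‖) := by
    rw [_root_.smul_ball hc, smul_inv_smul₀ hc, mul_div_cancel₀ _ hc'.ne']
  rw [hball, ← Set.smul_set_inter₀ hc, Measure.hausdorffMeasure_smul₀ (Nat.cast_nonneg n) hc]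
  calc ‖c‖₊ ^ (n : ℝ) • μH[n] (S ∩ ball (c⁻¹ • z) (r / ‖c‖))
      ≤ ENNReal.ofReal (‖c‖ ^ n) * ENNReal.ofReal (A * (r / ‖c‖) ^ n) := by
        rw [NNReal.rpow_natCast, ENNReal.smul_def, smul_eq_mul]
        refine mul_le_mul' (le_of_eq ?_) (h _ _ (by positivity))
        rw [← coe_nnnorm, ← NNReal.coe_pow, ENNReal.ofReal_coe_nnreal]
    _ = ENNReal.ofReal (A * r ^ n) := by
        rw [← ENNReal.ofReal_mul (by positivity), div_pow]
        congr 1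
        field_simp

end AreaGrowthBound

end AreaGrowth

theorem setLIntegral_comp_norm_le_tsum {E : Type*} [SeminormedAddCommGroup E] [MeasurableSpace E]
    (μ : Measure E) (T : Set E) {g : ℝ → ℝ≥0∞} (hg : AntitoneOn g (Ici 0)) :
    ∫⁻ x in T, g ‖x‖ ∂μ ≤ ∑' k : ℕ, g k * μ (T ∩ ball 0 (k + 1)) := by
  have hcover : T ⊆ ⋃ k : ℕ, T ∩ {x | ⌊‖x‖⌋₊ = k} := fun x hx => mem_iUnion.mpr ⟨_, hx, rfl⟩
  calc ∫⁻ x in T, g ‖x‖ ∂μ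
      ≤ ∫⁻ x in ⋃ k : ℕ, T ∩ {x | ⌊‖x‖⌋₊ = k}, g ‖x‖ ∂μ := lintegral_mono_set hcover
    _ ≤ ∑' k : ℕ, ∫⁻ x in T ∩ {x | ⌊‖x‖⌋₊ = k}, g ‖x‖ ∂μ := lintegral_iUnion_le _ _
    _ ≤ ∑' k : ℕ, ∫⁻ _ in T ∩ ball 0 (k + 1), g k ∂μ := by
        refine ENNReal.tsum_le_tsum fun k => ?_
        refine (setLIntegral_mono measurable_const fun x hx => ?_).trans
          (lintegral_mono_set fun x hx => ⟨hx.1, ?_⟩)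
        · refine hg (mem_Ici.mpr k.cast_nonneg) (norm_nonneg x) ?_
          rw [← hx.2]
          exact Nat.floor_le (norm_nonneg x)
        · rw [mem_ball_zero_iff, ← hx.2]
          exact Nat.lt_floor_add_one _
    _ = ∑' k : ℕ, g k * μ (T ∩ ball 0 (k + 1)) := by simp_rw [setLIntegral_const]

theorem antitoneOn_ofReal_exp_neg_sq_div (c : ℝ) (hc : 0 ≤ c) :
    AntitoneOn (fun t : ℝ => ENNReal.ofReal (Real.exp (-t ^ 2 / c))) (Ici 0) := by
  intro a ha b _ hab
  refine ENNReal.ofReal_le_ofReal (Real.exp_le_exp.mpr ?_)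
  have : a ^ 2 ≤ b ^ 2 := pow_le_pow_left₀ ha hab 2
  exact div_le_div_of_nonneg_right (by linarith) hc

theorem summable_exp_neg_sq_div_four_mul_succ_pow (n : ℕ) :
    Summable fun k : ℕ => Real.exp (-(k : ℝ) ^ 2 / 4) * ((k : ℝ) + 1) ^ n := by
  have hshift := (summable_nat_add_iff 1).mpr
    ((Real.summable_pow_mul_exp_neg_nat_mul n (by norm_num : (0 : ℝ) < 1 / 4)).mul_left
      (Real.exp (1 / 4)))
  refine hshift.of_nonneg_of_le (fun k => by positivity) fun k => ?_
  -- `k ≤ k²` turns the Gaussian factor into a geometric one, shifted by one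
  have hk : (k : ℝ) ≤ (k : ℝ) ^ 2 := by exact_mod_cast Nat.le_self_pow two_ne_zero k
  rw [Nat.cast_add_one, mul_left_comm, ← Real.exp_add, mul_comm]
  gcongr
  linarith

def entropyBoundConst (n : ℕ) : ℝ :=
  (4 * Real.pi) ^ (-(n : ℝ) / 2) * ∑' k : ℕ, Real.exp (-(k : ℝ) ^ 2 / 4) * ((k : ℝ) + 1) ^ n

theorem entropyBoundConst_pos (n : ℕ) : 0 < entropyBoundConst n :=
  mul_pos (Real.rpow_pos_of_pos (by positivity) _)
    ((summable_exp_neg_sq_div_four_mul_succ_pow n).tsum_pos (fun _ => by positivity) 0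
      (by positivity))

theorem gaussianArea_le_of_areaGrowthBound {n : ℕ} {A : ℝ} (hA : 0 ≤ A)
    {T : Set (EuclideanSpace ℝ (Fin (n + 1)))} (hT : AreaGrowthBound n A T) :
    gaussianArea n T ≤ ENNReal.ofReal (entropyBoundConst n * A) := by
  have hsum := summable_exp_neg_sq_div_four_mul_succ_pow n
  have hweight := setLIntegral_comp_norm_le_tsum μH[n] T
    (antitoneOn_ofReal_exp_neg_sq_div 4 (by norm_num))
  calc gaussianArea n T
      ≤ ENNReal.ofReal ((4 * Real.pi) ^ (-(n : ℝ) / 2)) *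
          ∑' k : ℕ, ENNReal.ofReal (Real.exp (-(k : ℝ) ^ 2 / 4)) * μH[n] (T ∩ ball 0 (k + 1)) :=
        mul_le_mul_right hweight _
    _ ≤ ENNReal.ofReal ((4 * Real.pi) ^ (-(n : ℝ) / 2)) *
          ∑' k : ℕ, ENNReal.ofReal (A * (Real.exp (-(k : ℝ) ^ 2 / 4) * ((k : ℝ) + 1) ^ n)) := by
        gcongr with k
        rw [mul_left_comm, ENNReal.ofReal_mul (Real.exp_nonneg _)]
        exact mul_le_mul_right (hT 0 _ (by positivity)) _
    _ = ENNReal.ofReal (entropyBoundConst n * A) := by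
        rw [← ENNReal.ofReal_tsum_of_nonneg (fun k => by positivity) (hsum.mul_left A),
          tsum_mul_left, ← ENNReal.ofReal_mul (by positivity), entropyBoundConst]
        ring_nf

theorem entropy_le_of_areaGrowthBound {n : ℕ} {A : ℝ} (hA : 0 ≤ A)
    {S : Set (EuclideanSpace ℝ (Fin (n + 1)))} (hS : AreaGrowthBound n A S) :
    entropy n S ≤ ENNReal.ofReal (entropyBoundConst n * A) := by
  refine iSup₂_le fun ρ hρ => iSup_le fun y => gaussianArea_le_of_areaGrowthBound hA ?_
  have himage : (fun x => ρ • x + y) '' S = y +ᵥ ρ • S := by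
    rw [← Set.image_smul, ← Set.image_vadd, Set.image_image]
    simp only [vadd_eq_add, add_comm]
  rw [himage]
  exact (hS.smul hρ.ne').vadd y

theorem stmt_5_general (n : ℕ) :
    ∃ C : ℝ, 0 < C ∧ ∀ S : Set (EuclideanSpace ℝ (Fin (n + 1))), MeasurableSet S →
      ∀ A : ℝ, 0 < A →
      (∀ (y : EuclideanSpace ℝ (Fin (n + 1))) (r : ℝ), 0 < r →
        μH[n] (S ∩ ball y r) ≤ ENNReal.ofReal (A * r ^ n)) →
      entropy n S ≤ ENNReal.ofReal (C * A) :=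
  ⟨entropyBoundConst n, entropyBoundConst_pos n, fun _ _ _ hA hS =>
    entropy_le_of_areaGrowthBound hA.le hS⟩

theorem stmt_5 (n : ℕ) (hn : 1 ≤ n) :
    ∃ C : ℝ, 0 < C ∧ ∀ S : Set (EuclideanSpace ℝ (Fin (n + 1))), MeasurableSet S →
      ∀ A : ℝ, 0 < A →
      (∀ (y : EuclideanSpace ℝ (Fin (n + 1))) (r : ℝ), 0 < r →
        μH[n] (S ∩ ball y r) ≤ ENNReal.ofReal (A * r ^ n)) →
      entropy n S ≤ ENNReal.ofReal (C * A) :=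
  stmt_5_general n

end
end

section
/- Let X be a Hausdorff topological space and Y a connected, locally compact, Hausdorff topological space. Let f : X → Y be a surjective continuous map that is a local homeomorphism (every point of X has an open neighborhood mapped by f homeomorphically onto an open subset of Y) and proper (f⁻¹(K) is compact for every compact K ⊆ Y). Then f is a covering map; moreover, every fiber f⁻¹({y}) is finite, and the cardinality of the fiber f⁻¹({y}) is the same for all y ∈ Y. -/
/-!
A proper map to a locally compact Hausdorff space is closed, and the fibres of a local
homeomorphism are discrete, hence finite when compact. Around the finitely many points of a fibre
choose disjoint sheets; since `f` is closed, some neighbourhood of the base point has its preimage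
inside their union, so `f` is a covering map. Fibre cardinality is then locally constant, hence
constant on a connected base.
-/

open Topology Filter

section

variable {X Y : Type*} [TopologicalSpace X] [TopologicalSpace Y] {f : X → Y}

theorem IsLocalHomeomorph.isDiscrete_preimage_singleton (hf : IsLocalHomeomorph f) (y : Y) :
    IsDiscrete (f ⁻¹' {y}) :=
  .of_openPartialHomeomorph f subset_rfl fun x _ ↦
    let ⟨φ, hx, hφ⟩ := hf x
    ⟨φ, hx, hφ.symm⟩

theorem IsProperMap.finite_preimage_singleton (hprop : IsProperMap f) (hloc : IsLocalHomeomorph f)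
    (y : Y) : (f ⁻¹' {y}).Finite :=
  (hprop.isCompact_preimage isCompact_singleton).finite (hloc.isDiscrete_preimage_singleton y)

theorem IsProperMap.isCoveringMap [T2Space X] (hprop : IsProperMap f)
    (hloc : IsLocalHomeomorph f) : IsCoveringMap f := by
  rw [isCoveringMap_iff_isCoveringMapOn_univ]
  exact hprop.isClosedMap.isCoveringMapOn_of_isLocalHomeomorphOn
    (fun y _ ↦ hprop.finite_preimage_singleton hloc y) hloc.isLocalHomeomorphOn

theorem IsEvenlyCovered.eventually {I : Type*} [TopologicalSpace I] {y : Y}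
    (h : IsEvenlyCovered f y I) : ∀ᶠ y' in 𝓝 y, IsEvenlyCovered f y' I := by
  obtain ⟨hI, U, hyU, hU, hfU, H, hH⟩ := h
  filter_upwards [hU.mem_nhds hyU] with y' hy'
  exact ⟨hI, U, hy', hU, hfU, H, hH⟩

theorem IsCoveringMap.natCard_preimage_singleton_eq [PreconnectedSpace Y] (hf : IsCoveringMap f)
    (y₁ y₂ : Y) : Nat.card (f ⁻¹' {y₁}) = Nat.card (f ⁻¹' {y₂}) := by
  have hconst : IsLocallyConstant fun y ↦ Nat.card (f ⁻¹' {y}) :=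
    (IsLocallyConstant.iff_eventually_eq _).2 fun y ↦ (hf y).eventually.mono fun _ hy' ↦
      (Nat.card_congr hy'.fiberHomeomorph.toEquiv).symm
  exact hconst.apply_eq_of_preconnectedSpace y₁ y₂

end

theorem stmt_13_general {X Y : Type*} [TopologicalSpace X] [TopologicalSpace Y]
    [T2Space X] [T2Space Y] [ConnectedSpace Y] [LocallyCompactSpace Y]
    (f : X → Y) (hf : Continuous f)
    (hloc : IsLocalHomeomorph f)
    (hproper : ∀ K : Set Y, IsCompact K → IsCompact (f ⁻¹' K)) :
    IsCoveringMap f ∧ (∀ y : Y, (f ⁻¹' {y}).Finite) ∧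
      ∀ y₁ y₂ : Y, Nat.card (f ⁻¹' {y₁}) = Nat.card (f ⁻¹' {y₂}) := by
  have hprop : IsProperMap f := isProperMap_iff_isCompact_preimage.2 ⟨hf, hproper⟩
  have hcov : IsCoveringMap f := hprop.isCoveringMap hloc
  exact ⟨hcov, hprop.finite_preimage_singleton hloc, hcov.natCard_preimage_singleton_eq⟩

theorem stmt_13 {X Y : Type*} [TopologicalSpace X] [TopologicalSpace Y]
    [T2Space X] [T2Space Y] [ConnectedSpace Y] [LocallyCompactSpace Y]
    (f : X → Y) (hf : Continuous f) (hsurj : Function.Surjective f)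
    (hloc : IsLocalHomeomorph f)
    (hproper : ∀ K : Set Y, IsCompact K → IsCompact (f ⁻¹' K)) :
    IsCoveringMap f ∧ (∀ y : Y, (f ⁻¹' {y}).Finite) ∧
      ∀ y₁ y₂ : Y, Nat.card (f ⁻¹' {y₁}) = Nat.card (f ⁻¹' {y₂}) :=
  stmt_13_general f hf hloc hproper
end
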